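/- Suppose the nonnegative sequence (μ_k)_{k≥1} satisfies μ_k ≤ C·k^{-2α} for some constants C > 0 and α > 1/2. Define Q_n(t) = (1/√n)·(∑_{k=1}^∞ min{t², μ_k})^{1/2}. Then there is a constant C' depending only on (C, α) such that Q_n(t) ≤ C' · t^{1 - 1/(2α)} / √n for all t ∈ (0,1]. Consequently, the smallest positive ν satisfying 40ν² ≥ Q_n(ν) obeys ν² ≤ C'' · n^{-2α/(2α+1)} for a constant C'' depending only on (C, α). -/

import Mathlib

/-!
With `a = 2α`, split `∑ₖ min(t², μₖ)` at `K = ⌈t^(-2/a)⌉`: the first `K` terms contribute at most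
`K t²` and, by comparison with `∫_K^∞ x^(-a) dx`, the tail at most `C K^(1-a) / (a-1)`; both are
`O(t^(2-2/a))`, and `K = 1` gives `O(t²)` for `t ≥ 1`.

The least solution of `Q(v) / √n ≤ c v²` is bounded by any solution. With `Q(v) ≤ B v^(1-1/a)` on
`(0, 1]`, `Q(v) ≤ B v` on `[1, ∞)` and `x = B / (c √n)`, the point `v = x^(a/(a+1))` balances the
first bound against `c v²` when `x ≤ 1`, and `v = x` balances the second when `x ≥ 1`.
-/

open Real

theorem tsum_rpow_neg_add_le {a x₀ : ℝ} (ha : 1 < a) (hx₀ : 0 < x₀) :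
    ∑' i : ℕ, (x₀ + (i + 1 : ℕ)) ^ (-a) ≤ x₀ ^ (1 - a) / (a - 1) := by
  refine Real.tsum_le_of_sum_range_le (fun i => by positivity) fun n => ?_
  have hanti : AntitoneOn (fun x : ℝ => x ^ (-a)) (Set.Icc x₀ (x₀ + n)) :=
    fun x hx y _ hxy => rpow_le_rpow_of_nonpos (hx₀.trans_le hx.1) hxy (by linarith)
  have h0 : (0 : ℝ) ∉ Set.uIcc x₀ (x₀ + n) := by
    rw [Set.uIcc_of_le (by simp)]
    exact fun h => hx₀.not_ge h.1
  calc ∑ i ∈ Finset.range n, (x₀ + (i + 1 : ℕ)) ^ (-a)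
      ≤ ∫ x in x₀..x₀ + n, x ^ (-a) := hanti.sum_le_integral
    _ = (x₀ ^ (1 - a) - (x₀ + n) ^ (1 - a)) / (a - 1) := by
        rw [integral_rpow (Or.inr ⟨by linarith, h0⟩), ← neg_div_neg_eq]
        ring_nf
    _ ≤ x₀ ^ (1 - a) / (a - 1) := by
        gcongr
        exact sub_le_self _ (by positivity)

theorem tsum_min_le_of_le_rpow {C a s : ℝ} (hC : 0 ≤ C) (ha : 1 < a) (hs : 0 ≤ s)
    {μ : ℕ → ℝ} (hμ0 : ∀ k, 0 ≤ μ k) (hμ : ∀ k : ℕ, 1 ≤ k → μ k ≤ C * (k : ℝ) ^ (-a))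
    {K : ℕ} (hK : 0 < K) :
    ∑' k : ℕ, min s (μ (k + 1)) ≤ K * s + C * (K : ℝ) ^ (1 - a) / (a - 1) := by
  have hμ' : ∀ k, μ (k + K + 1) ≤ C * ((K : ℝ) + (k + 1 : ℕ)) ^ (-a) := fun k => by
    simpa [add_comm, add_left_comm, add_assoc] using hμ (k + K + 1) (by omega)
  have hsum : Summable fun k => min s (μ (k + 1)) := by
    refine .of_nonneg_of_le (fun k => le_min hs (hμ0 _))
      (fun k => (min_le_right _ _).trans (hμ (k + 1) (by omega))) (.mul_left C ?_)
    exact (summable_nat_add_iff 1).mpr (summable_nat_rpow.mpr (by linarith))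
  have hhead : ∑ k ∈ Finset.range K, min s (μ (k + 1)) ≤ K * s := by
    simpa using Finset.sum_le_sum fun k (_ : k ∈ Finset.range K) => min_le_left s (μ (k + 1))
  have htail : ∑' k, min s (μ (k + K + 1)) ≤ C * (K : ℝ) ^ (1 - a) / (a - 1) := calc
    _ ≤ C * ∑' k : ℕ, ((K : ℝ) + (k + 1 : ℕ)) ^ (-a) := by
        have hsum' : Summable fun k : ℕ => ((K : ℝ) + (k + 1 : ℕ)) ^ (-a) :=
          ((summable_nat_add_iff (K + 1)).mpr (summable_nat_rpow.mpr (neg_lt_neg ha))).congr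
            fun k => by push_cast; ring_nf
        rw [← tsum_mul_left]
        exact ((summable_nat_add_iff K).mpr hsum).tsum_mono (hsum'.mul_left C)
          fun k => (min_le_right _ _).trans (hμ' k)
    _ ≤ C * (K : ℝ) ^ (1 - a) / (a - 1) := by
        rw [mul_div_assoc]
        gcongr
        exact tsum_rpow_neg_add_le ha (by positivity)
  rw [← hsum.sum_add_tsum_nat_add K]
  exact add_le_add hhead htail

theorem tsum_min_sq_le_rpow_of_le_one {C a t : ℝ} (hC : 0 ≤ C) (ha : 1 < a)
    {μ : ℕ → ℝ} (hμ0 : ∀ k, 0 ≤ μ k) (hμ : ∀ k : ℕ, 1 ≤ k → μ k ≤ C * (k : ℝ) ^ (-a))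
    (ht : 0 < t) (ht1 : t ≤ 1) :
    ∑' k : ℕ, min (t ^ 2) (μ (k + 1)) ≤ (2 + C / (a - 1)) * t ^ (2 - 2 / a) := by
  set x := t ^ (-(2 / a))
  have hx : 1 ≤ x := one_le_rpow_of_pos_of_le_one_of_nonpos ht ht1
    (neg_nonpos.mpr (div_nonneg zero_le_two (by linarith)))
  have hK : 0 < ⌈x⌉₊ := Nat.ceil_pos.mpr (by linarith)
  have hxK : x ≤ ⌈x⌉₊ := Nat.le_ceil x
  have hKx : (⌈x⌉₊ : ℝ) ≤ 2 * x := by linarith [Nat.ceil_lt_add_one (zero_le_one.trans hx)]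
  have hxt : x * t ^ 2 = t ^ (2 - 2 / a) := by
    rw [← rpow_two, ← rpow_add ht]; ring_nf
  have hxa : x ^ (1 - a) = t ^ (2 - 2 / a) := by
    rw [← rpow_mul ht.le]; congr 1; field_simp; ring
  calc ∑' k : ℕ, min (t ^ 2) (μ (k + 1))
      ≤ ⌈x⌉₊ * t ^ 2 + C * (⌈x⌉₊ : ℝ) ^ (1 - a) / (a - 1) :=
        tsum_min_le_of_le_rpow hC ha (by positivity) hμ0 hμ hK
    _ ≤ 2 * x * t ^ 2 + C * x ^ (1 - a) / (a - 1) := by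
        have : (⌈x⌉₊ : ℝ) ^ (1 - a) ≤ x ^ (1 - a) :=
          rpow_le_rpow_of_nonpos (by linarith) hxK (by linarith)
        have : 0 < a - 1 := by linarith
        gcongr
    _ = (2 + C / (a - 1)) * t ^ (2 - 2 / a) := by
        rw [mul_assoc, hxt, hxa]; ring

theorem tsum_min_sq_le_sq_of_one_le {C a t : ℝ} (hC : 0 ≤ C) (ha : 1 < a)
    {μ : ℕ → ℝ} (hμ0 : ∀ k, 0 ≤ μ k) (hμ : ∀ k : ℕ, 1 ≤ k → μ k ≤ C * (k : ℝ) ^ (-a))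
    (ht : 1 ≤ t) :
    ∑' k : ℕ, min (t ^ 2) (μ (k + 1)) ≤ (1 + C / (a - 1)) * t ^ 2 := by
  have : 0 ≤ C / (a - 1) := div_nonneg hC (by linarith)
  calc ∑' k : ℕ, min (t ^ 2) (μ (k + 1))
      ≤ (1 : ℕ) * t ^ 2 + C * ((1 : ℕ) : ℝ) ^ (1 - a) / (a - 1) :=
        tsum_min_le_of_le_rpow hC ha (by positivity) hμ0 hμ one_pos
    _ ≤ (1 + C / (a - 1)) * t ^ 2 := by
        have : 1 ≤ t ^ 2 := one_le_pow₀ ht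
        simp only [Nat.cast_one, one_rpow, mul_one, one_mul]
        nlinarith

theorem sqrt_tsum_min_sq_le_of_le_one {C a t : ℝ} (hC : 0 ≤ C) (ha : 1 < a)
    {μ : ℕ → ℝ} (hμ0 : ∀ k, 0 ≤ μ k) (hμ : ∀ k : ℕ, 1 ≤ k → μ k ≤ C * (k : ℝ) ^ (-a))
    (ht : 0 < t) (ht1 : t ≤ 1) :
    √(∑' k : ℕ, min (t ^ 2) (μ (k + 1))) ≤ √(2 + C / (a - 1)) * t ^ (1 - 1 / a) := by
  calc √(∑' k : ℕ, min (t ^ 2) (μ (k + 1)))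
      ≤ √((2 + C / (a - 1)) * t ^ (2 - 2 / a)) :=
        sqrt_le_sqrt (tsum_min_sq_le_rpow_of_le_one hC ha hμ0 hμ ht ht1)
    _ = √(2 + C / (a - 1)) * t ^ (1 - 1 / a) := by
        rw [sqrt_mul' _ (by positivity), sqrt_eq_rpow (t ^ _), ← rpow_mul ht.le]
        ring_nf

theorem sqrt_tsum_min_sq_le_of_one_le {C a t : ℝ} (hC : 0 ≤ C) (ha : 1 < a)
    {μ : ℕ → ℝ} (hμ0 : ∀ k, 0 ≤ μ k) (hμ : ∀ k : ℕ, 1 ≤ k → μ k ≤ C * (k : ℝ) ^ (-a))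
    (ht : 1 ≤ t) :
    √(∑' k : ℕ, min (t ^ 2) (μ (k + 1))) ≤ √(2 + C / (a - 1)) * t := by
  calc √(∑' k : ℕ, min (t ^ 2) (μ (k + 1)))
      ≤ √((2 + C / (a - 1)) * t ^ 2) := by
        refine sqrt_le_sqrt ((tsum_min_sq_le_sq_of_one_le hC ha hμ0 hμ ht).trans ?_)
        gcongr
        norm_num
    _ = √(2 + C / (a - 1)) * t := by
        rw [sqrt_mul' _ (by positivity), sqrt_sq (by linarith)]

theorem exists_pos_critical_sq_le_rpow {Q : ℝ → ℝ} {B c a n : ℝ} (hB : 0 < B) (hc : 0 < c)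
    (ha : 0 < a) (hn : 1 ≤ n)
    (hQ_small : ∀ t, 0 < t → t ≤ 1 → Q t ≤ B * t ^ (1 - 1 / a))
    (hQ_large : ∀ t, 1 ≤ t → Q t ≤ B * t) :
    ∃ v, (0 < v ∧ 1 / √n * Q v ≤ c * v ^ 2) ∧
      v ^ 2 ≤ ((B / c) ^ (2 * a / (a + 1)) + (B / c) ^ 2) * n ^ (-a / (a + 1)) := by
  rw [neg_div, mul_div_assoc]
  set p := a / (a + 1)
  have hp : 0 < p := by positivity
  have hp1 : p ≤ 1 := (div_le_one (by linarith)).mpr (by linarith)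
  have hn0 : 0 < n := by linarith
  have hsqrt : 1 / √n = n ^ (-(1 / 2) : ℝ) := by rw [sqrt_eq_rpow, rpow_neg hn0.le, one_div]
  set x := B / c * n ^ (-(1 / 2) : ℝ)
  have hx : 0 < x := by positivity
  have hBx : 1 / √n * B = c * x := by rw [hsqrt]; simp only [x]; field_simp
  rcases le_total x 1 with hx1 | hx1
  · refine ⟨x ^ p, ⟨by positivity, ?_⟩, ?_⟩
    · have hxp : x * (x ^ p) ^ (1 - 1 / a) = (x ^ p) ^ 2 := by
        nth_rewrite 1 [← rpow_one x]
        rw [← rpow_two, ← rpow_mul hx.le, ← rpow_mul hx.le, ← rpow_add hx]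
        congr 1
        simp only [p]
        field_simp
        ring
      calc 1 / √n * Q (x ^ p) ≤ 1 / √n * (B * (x ^ p) ^ (1 - 1 / a)) := by
            gcongr
            exact hQ_small _ (by positivity) (rpow_le_one hx.le hx1 hp.le)
        _ = c * (x ^ p) ^ 2 := by rw [← mul_assoc, hBx, mul_assoc, hxp]
    · calc (x ^ p) ^ 2 = (B / c) ^ (2 * p) * n ^ (-p) := by
            rw [← rpow_two, ← rpow_mul hx.le, mul_rpow (by positivity) (by positivity),
              ← rpow_mul hn0.le]
            ring_nf
        _ ≤ ((B / c) ^ (2 * p) + (B / c) ^ 2) * n ^ (-p) := by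
            gcongr
            exact le_add_of_nonneg_right (by positivity)
  · refine ⟨x, ⟨hx, ?_⟩, ?_⟩
    · calc 1 / √n * Q x ≤ 1 / √n * (B * x) := by gcongr; exact hQ_large x hx1
        _ = c * x ^ 2 := by rw [← mul_assoc, hBx]; ring
    · calc x ^ 2 = (B / c) ^ 2 * n ^ (-1 : ℝ) := by
            rw [mul_pow, ← rpow_natCast (n ^ _), ← rpow_mul hn0.le]
            norm_num
        _ ≤ ((B / c) ^ (2 * p) + (B / c) ^ 2) * n ^ (-p) := by
            gcongr
            exact le_add_of_nonneg_left (by positivity)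

/-- For kernels with polynomial eigenvalue decay `μ_k ≤ C k^{-2α}` (`α > 1/2`),
the localized complexity `Q_n(t) = n^{-1/2} (∑_k min(t², μ_k))^{1/2}` satisfies
`Q_n(t) ≤ C' t^{1-1/(2α)}/√n` on `(0,1]`, and the smallest positive solution `ν`
of `40 ν² ≥ Q_n(ν)` satisfies `ν² ≤ C'' n^{-2α/(2α+1)}`, with `C', C''`
depending only on `(C, α)`. -/
theorem sobolev_critical_radius (C α : ℝ) (hC : 0 < C) (hα : 1 / 2 < α) :
    ∃ C' > (0:ℝ), ∃ C'' > (0:ℝ),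
      ∀ (n : ℕ), 1 ≤ n → ∀ (μ : ℕ → ℝ), (∀ k, 0 ≤ μ k) →
        (∀ k : ℕ, 1 ≤ k → μ k ≤ C * (k : ℝ) ^ (-(2 * α))) →
        ((∀ t : ℝ, 0 < t → t ≤ 1 →
            (1 / Real.sqrt n) * Real.sqrt (∑' k : ℕ, min (t ^ 2) (μ (k + 1))) ≤
              C' * t ^ (1 - 1 / (2 * α)) / Real.sqrt n) ∧
          (∀ ν : ℝ,
            IsLeast {v : ℝ | 0 < v ∧
                (1 / Real.sqrt n) * Real.sqrt (∑' k : ℕ, min (v ^ 2) (μ (k + 1)))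
                  ≤ 40 * v ^ 2} ν →
            ν ^ 2 ≤ C'' * (n : ℝ) ^ (-(2 * α) / (2 * α + 1)))) := by
  have ha : 1 < 2 * α := by linarith
  have hA : 0 < 2 + C / (2 * α - 1) := by
    have : 0 < C / (2 * α - 1) := div_pos hC (by linarith)
    linarith
  set B := √(2 + C / (2 * α - 1))
  have hB : 0 < B := sqrt_pos.mpr hA
  refine ⟨B, hB, (B / 40) ^ (2 * (2 * α) / (2 * α + 1)) + (B / 40) ^ 2, by positivity,
    fun n hn μ hμ0 hμ => ⟨fun t ht ht1 => ?_, fun ν hν => ?_⟩⟩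
  · rw [one_div_mul_eq_div]
    exact div_le_div_of_nonneg_right
      (sqrt_tsum_min_sq_le_of_le_one hC.le ha hμ0 hμ ht ht1) (sqrt_nonneg _)
  · obtain ⟨v, hv, hv_sq⟩ := exists_pos_critical_sq_le_rpow (c := 40) (a := 2 * α) (n := n)
      hB (by norm_num) (by positivity) (by exact_mod_cast hn)
      (fun t ht ht1 => sqrt_tsum_min_sq_le_of_le_one hC.le ha hμ0 hμ ht ht1)
      (fun t ht => sqrt_tsum_min_sq_le_of_one_le hC.le ha hμ0 hμ ht)
    exact (pow_le_pow_left₀ hν.1.1.le (hν.2 hv) 2).trans hv_sq
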